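/- arXiv:2506.00762 — 4 statements merged into one kernel-verified Lean document; each statement's English description precedes it below -/
import Mathlib

section
/- Let d ≥ 1 and let μ : [0,∞) → M₊(ℝ^d) be a map with μ_0 = 0 which is continuous for the topology of weak convergence and nondecreasing. Then there exists a σ-finite positive Borel measure ν on [0,∞) × ℝ^d such that ν([0,t] × A) = μ_t(A) for every t ≥ 0 and every Borel set A ⊆ ℝ^d. -/
open MeasureTheory Filter Topology
open scoped NNReal ENNReal

/-!
Write `ρ_A` for the Stieltjes measure of `t ↦ μ_t(A)` on `[0, ∞)`; it exists because the
increments of `t ↦ μ_t(A)` are dominated by those of the continuous total mass. `A ↦ ρ_A` is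
additive, so every `ρ_A` has a density `D_A ≤ 1` with respect to `ρ := ρ_X`, additive in `A`
almost everywhere. As `∫_{[0,k]} D_A dρ = μ_k(A)`, continuity from above of `μ_k` makes
`A ↦ D_A(t)` continuous along countable families decreasing to `∅`, for `ρ`-a.e. `t`.
After embedding the standard Borel space in `ℝ`, the functions `q ↦ D_{(-∞, q]}(t)`, `q ∈ ℚ`, are
therefore rational distribution functions for `ρ`-a.e. `t`, and define a Markov kernel `κ` from
time to space. Then `ν := ρ ⊗ κ` works: for fixed `t`, the measures `ν([0, t] × ·)` and `μ_t`
agree on the π-system of rational half-lines.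
-/

open Set ProbabilityTheory

lemma Monotone.continuous_of_sub_le_sub {α : Type*} [TopologicalSpace α] [LinearOrder α]
    {f g : α → ℝ} (hf : Monotone f) (hg : Continuous g)
    (h : ∀ ⦃s t⦄, s ≤ t → f t - f s ≤ g t - g s) : Continuous f := by
  have hdist : ∀ s t, dist (f s) (f t) ≤ dist (g s) (g t) := by
    intro s t
    wlog hst : s ≤ t generalizing s t
    · rw [dist_comm, dist_comm (g s)]
      exact this t s (le_of_not_ge hst)
    rw [dist_comm, Real.dist_eq, abs_of_nonneg (sub_nonneg.2 (hf hst)), dist_comm, Real.dist_eq]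
    exact (h hst).trans (le_abs_self _)
  refine continuous_iff_continuousAt.2 fun x ↦ tendsto_iff_dist_tendsto_zero.2 ?_
  exact squeeze_zero (fun _ ↦ dist_nonneg) (fun y ↦ hdist y x)
    (tendsto_iff_dist_tendsto_zero.1 (hg.tendsto x))

lemma NNReal.iUnion_Iic_natCast : ⋃ n : ℕ, Iic (n : ℝ≥0) = univ :=
  iUnion_eq_univ_iff.2 fun t ↦ exists_nat_ge t

lemma Real.iInter_Ioi_rat : ⋂ q : ℚ, Ioi (q : ℝ) = ∅ :=
  iInter_eq_empty_iff.2 fun x ↦ (exists_rat_gt x).imp fun _ h ↦ not_lt.2 h.le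

lemma Real.iInter_Ioc_rat_gt (q : ℚ) : ⋂ r : Ioi q, Ioc (q : ℝ) (r : ℚ) = ∅ := by
  refine iInter_eq_empty_iff.2 fun x ↦ ?_
  by_cases hx : (q : ℝ) < x
  · obtain ⟨r, hqr, hrx⟩ := exists_rat_btwn hx
    exact ⟨⟨r, by exact_mod_cast hqr⟩, fun h ↦ not_le.2 hrx h.2⟩
  · exact ⟨⟨q + 1, lt_add_one q⟩, fun h ↦ hx h.1⟩

lemma isRatStieltjesPoint_toReal {α : Type*} {f : α → ℚ → ℝ≥0∞} {a : α}
    (hmono : Monotone (f a)) (hsup : ⨆ q, f a q = 1) (hinf : ⨅ q, f a q = 0)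
    (hright : ∀ q, ⨅ r : Ioi q, f a r = f a q) :
    IsRatStieltjesPoint (fun a q ↦ (f a q).toReal) a := by
  have hfin : ∀ q, f a q ≠ ∞ := fun q ↦
    ne_top_of_le_ne_top ENNReal.one_ne_top (hsup ▸ le_iSup _ q)
  refine ⟨fun q r hqr ↦ ENNReal.toReal_mono (hfin r) (hmono hqr), ?_, ?_, fun q ↦ ?_⟩
  · simpa [Function.comp_def, hsup] using
      (ENNReal.tendsto_toReal (hsup ▸ ENNReal.one_ne_top)).comp (tendsto_atTop_iSup hmono)
  · simpa [Function.comp_def, hinf] using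
      (ENNReal.tendsto_toReal (hinf ▸ ENNReal.zero_ne_top)).comp (tendsto_atBot_iInf hmono)
  · rw [← ENNReal.toReal_iInf fun r : Ioi q ↦ hfin r, hright]

variable {X : Type*} [MeasurableSpace X]

lemma sigmaFinite_of_measure_Iic_prod_univ_ne_top {ν : Measure (ℝ≥0 × X)}
    (h : ∀ t, ν (Iic t ×ˢ univ) ≠ ∞) : SigmaFinite ν :=
  ⟨⟨{ set n := Iic (n : ℝ≥0) ×ˢ univ
      set_mem _ := trivial
      finite n := (h n).lt_top
      spanning := by rw [← iUnion_prod_const, NNReal.iUnion_Iic_natCast, univ_prod_univ] }⟩⟩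

structure IsMeasureValuedCDF (μ : ℝ≥0 → FiniteMeasure X) : Prop where
  zero : μ 0 = 0
  mono : Monotone fun t ↦ (μ t : Measure X)
  continuous_mass : Continuous fun t ↦ (μ t).mass

namespace IsMeasureValuedCDF

variable {μ : ℝ≥0 → FiniteMeasure X}

lemma map {Y : Type*} [MeasurableSpace Y] (hμ : IsMeasureValuedCDF μ) {f : X → Y}
    (hf : Measurable f) :
    IsMeasureValuedCDF fun t ↦ (μ t).map f where
  zero := by rw [hμ.zero]; exact FiniteMeasure.toMeasure_injective (by simp)
  mono _ _ hst := by simpa using Measure.map_mono (hμ.mono hst) hf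
  continuous_mass := by
    simpa [FiniteMeasure.mass, FiniteMeasure.map_apply _ hf .univ] using hμ.continuous_mass

lemma monotone_apply (hμ : IsMeasureValuedCDF μ) (A : Set X) :
    Monotone fun t ↦ (μ t A : ℝ) := fun _ _ hst ↦ by
  simpa [← FiniteMeasure.ennreal_coeFn_eq_coeFn_toMeasure] using
    Measure.le_iff'.1 (hμ.mono hst) A

lemma apply_sub_apply_le_mass_sub_mass (hμ : IsMeasureValuedCDF μ) {A : Set X}
    (hA : MeasurableSet A) {s t : ℝ≥0} (hst : s ≤ t) :
    (μ t A : ℝ) - μ s A ≤ (μ t).mass - (μ s).mass := by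
  have h := measure_mono (μ := (μ t : Measure X) - μ s) (subset_univ A)
  rw [Measure.sub_apply hA (hμ.mono hst), Measure.sub_apply .univ (hμ.mono hst),
    ← FiniteMeasure.ennreal_mass, ← FiniteMeasure.ennreal_mass,
    ← FiniteMeasure.ennreal_coeFn_eq_coeFn_toMeasure,
    ← FiniteMeasure.ennreal_coeFn_eq_coeFn_toMeasure, ← ENNReal.coe_sub, ← ENNReal.coe_sub,
    ENNReal.coe_le_coe, ← NNReal.coe_le_coe] at h
  rwa [NNReal.coe_sub (by exact_mod_cast hμ.monotone_apply A hst),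
    NNReal.coe_sub (by exact_mod_cast hμ.monotone_apply univ hst)] at h

lemma continuous_apply (hμ : IsMeasureValuedCDF μ) {A : Set X} (hA : MeasurableSet A) :
    Continuous fun t ↦ (μ t A : ℝ) :=
  (hμ.monotone_apply A).continuous_of_sub_le_sub (NNReal.continuous_coe.comp hμ.continuous_mass)
    fun _ _ ↦ hμ.apply_sub_apply_le_mass_sub_mass hA

variable (hμ : IsMeasureValuedCDF μ)

noncomputable def timeMeasure (A : Set X) : Measure ℝ≥0 :=
  (hμ.monotone_apply A).stieltjesFunction.measure

instance isLocallyFiniteMeasure_timeMeasure (A : Set X) :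
    IsLocallyFiniteMeasure (hμ.timeMeasure A) := by
  rw [timeMeasure]
  infer_instance

lemma stieltjesFunction_apply {A : Set X} (hA : MeasurableSet A) (t : ℝ≥0) :
    (hμ.monotone_apply A).stieltjesFunction t = μ t A :=
  rightLim_eq_of_tendsto ((hμ.continuous_apply hA).tendsto t |>.mono_left nhdsWithin_le_nhds)

lemma timeMeasure_Iic {A : Set X} (hA : MeasurableSet A) (t : ℝ≥0) :
    hμ.timeMeasure A (Iic t) = μ t A := by
  have hbot : Tendsto (hμ.monotone_apply A).stieltjesFunction atBot (𝓝 0) := by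
    have h0 : (hμ.monotone_apply A).stieltjesFunction ⊥ = 0 := by
      simp [hμ.stieltjesFunction_apply hA, hμ.zero]
    rw [OrderBot.atBot_eq, ← h0]
    exact tendsto_pure_nhds _ _
  rw [timeMeasure, StieltjesFunction.measure_Iic _ hbot t, sub_zero,
    hμ.stieltjesFunction_apply hA, ENNReal.ofReal_coe_nnreal]

lemma timeMeasure_union {A B : Set X} (hA : MeasurableSet A) (hB : MeasurableSet B)
    (hAB : Disjoint A B) : hμ.timeMeasure (A ∪ B) = hμ.timeMeasure A + hμ.timeMeasure B := by
  rw [timeMeasure, timeMeasure, timeMeasure, ← StieltjesFunction.measure_add]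
  congr 1
  ext t
  rw [StieltjesFunction.add_apply, hμ.stieltjesFunction_apply (hA.union hB),
    hμ.stieltjesFunction_apply hA, hμ.stieltjesFunction_apply hB]
  have h : (μ t (A ∪ B) : ℝ≥0∞) = μ t A + μ t B := by
    simp only [FiniteMeasure.ennreal_coeFn_eq_coeFn_toMeasure, measure_union hAB hB]
  exact_mod_cast h

lemma timeMeasure_mono {A B : Set X} (hA : MeasurableSet A) (hB : MeasurableSet B)
    (hAB : A ⊆ B) : hμ.timeMeasure A ≤ hμ.timeMeasure B := by
  rw [← union_sdiff_cancel hAB, hμ.timeMeasure_union hA (hB.diff hA) disjoint_sdiff_right]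
  exact Measure.le_add_right le_rfl

lemma absolutelyContinuous_timeMeasure {A : Set X} (hA : MeasurableSet A) :
    hμ.timeMeasure A ≪ hμ.timeMeasure univ :=
  Measure.absolutelyContinuous_of_le (hμ.timeMeasure_mono hA .univ (subset_univ A))

noncomputable def density (A : Set X) : ℝ≥0 → ℝ≥0∞ :=
  (hμ.timeMeasure A).rnDeriv (hμ.timeMeasure univ)

lemma measurable_density (A : Set X) : Measurable (hμ.density A) :=
  Measure.measurable_rnDeriv _ _

lemma setLIntegral_density {A : Set X} (hA : MeasurableSet A) (s : Set ℝ≥0) :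
    ∫⁻ t in s, hμ.density A t ∂hμ.timeMeasure univ = hμ.timeMeasure A s :=
  Measure.setLIntegral_rnDeriv (hμ.absolutelyContinuous_timeMeasure hA) s

lemma density_union {A B : Set X} (hA : MeasurableSet A) (hB : MeasurableSet B)
    (hAB : Disjoint A B) :
    hμ.density (A ∪ B) =ᵐ[hμ.timeMeasure univ] hμ.density A + hμ.density B := by
  rw [density, hμ.timeMeasure_union hA hB hAB]
  exact Measure.rnDeriv_add' _ _ _

lemma density_univ : hμ.density univ =ᵐ[hμ.timeMeasure univ] 1 :=
  Measure.rnDeriv_self _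

lemma ae_iInf_density_eq_zero {ι : Type*} [Countable ι] [Nonempty ι] {A : ι → Set X}
    (hA : ∀ i, MeasurableSet (A i)) (hdir : Directed (· ⊇ ·) A) (hempty : ⋂ i, A i = ∅) :
    ∀ᵐ t ∂hμ.timeMeasure univ, ⨅ i, hμ.density (A i) t = 0 := by
  rw [← Measure.restrict_univ (μ := hμ.timeMeasure univ), ← NNReal.iUnion_Iic_natCast,
    ae_restrict_iUnion_iff]
  intro n
  have hint : ∫⁻ t in Iic (n : ℝ≥0), ⨅ i, hμ.density (A i) t ∂hμ.timeMeasure univ = 0 := by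
    refine le_antisymm ?_ zero_le
    calc ∫⁻ t in Iic (n : ℝ≥0), ⨅ i, hμ.density (A i) t ∂hμ.timeMeasure univ
        ≤ ⨅ i, ∫⁻ t in Iic (n : ℝ≥0), hμ.density (A i) t ∂hμ.timeMeasure univ :=
          le_iInf fun i ↦ lintegral_mono fun t ↦ iInf_le _ i
      _ = ⨅ i, (μ n : Measure X) (A i) := by
          simp_rw [hμ.setLIntegral_density (hA _), hμ.timeMeasure_Iic (hA _),
            FiniteMeasure.ennreal_coeFn_eq_coeFn_toMeasure]
      _ = 0 := by
          rw [← Directed.measure_iInter (fun i ↦ (hA i).nullMeasurableSet) hdir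
            ⟨Classical.arbitrary ι, measure_ne_top _ _⟩, hempty, measure_empty]
  exact (lintegral_eq_zero_iff (Measurable.iInf fun _ ↦ hμ.measurable_density _)).1 hint

end IsMeasureValuedCDF

namespace IsMeasureValuedCDF

variable {μ : ℝ≥0 → FiniteMeasure ℝ} (hμ : IsMeasureValuedCDF μ)

lemma ae_density_Iic_eq_add_density_Ioc :
    ∀ᵐ t ∂hμ.timeMeasure univ, ∀ q r : ℚ, q ≤ r →
      hμ.density (Iic (r : ℝ)) t = hμ.density (Iic (q : ℝ)) t + hμ.density (Ioc (q : ℝ) r) t := by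
  refine ae_all_iff.2 fun q ↦ ae_all_iff.2 fun r ↦ ?_
  by_cases hqr : q ≤ r
  · have h := hμ.density_union measurableSet_Iic measurableSet_Ioc
      (Iic_disjoint_Ioc (le_refl (q : ℝ)) (c := (r : ℝ)))
    rw [Iic_union_Ioc_eq_Iic (by exact_mod_cast hqr)] at h
    filter_upwards [h] with t ht _ using ht
  · exact ae_of_all _ fun _ h ↦ absurd h hqr

lemma ae_density_Iic_add_density_Ioi :
    ∀ᵐ t ∂hμ.timeMeasure univ, ∀ q : ℚ,
      hμ.density (Iic (q : ℝ)) t + hμ.density (Ioi (q : ℝ)) t = 1 := by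
  refine ae_all_iff.2 fun q ↦ ?_
  have h := hμ.density_union measurableSet_Iic measurableSet_Ioi
    (Iic_disjoint_Ioi (le_refl (q : ℝ)))
  rw [Iic_union_Ioi] at h
  filter_upwards [h, hμ.density_univ] with t ht hone
  rw [← Pi.add_apply, ← ht, hone, Pi.one_apply]

noncomputable def ratCDF (t : ℝ≥0) (q : ℚ) : ℝ := (hμ.density (Iic (q : ℝ)) t).toReal

lemma measurable_ratCDF : Measurable hμ.ratCDF :=
  measurable_pi_lambda _ fun _ ↦ (hμ.measurable_density _).ennreal_toReal

lemma ae_isRatStieltjesPoint : ∀ᵐ t ∂hμ.timeMeasure univ, IsRatStieltjesPoint hμ.ratCDF t := by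
  have hIoi_zero := hμ.ae_iInf_density_eq_zero (fun q : ℚ ↦ measurableSet_Ioi)
    (Antitone.directed_ge fun _ _ h ↦ Ioi_subset_Ioi (by exact_mod_cast h)) Real.iInter_Ioi_rat
  have hIic_zero := hμ.ae_iInf_density_eq_zero (fun q : ℚ ↦ measurableSet_Iic)
    (Monotone.directed_ge fun _ _ h ↦ Iic_subset_Iic.2 (by exact_mod_cast h)) Real.iInter_Iic_rat
  have hIoc_zero : ∀ᵐ t ∂hμ.timeMeasure univ, ∀ q : ℚ,
      ⨅ r : Ioi q, hμ.density (Ioc (q : ℝ) (r : ℚ)) t = 0 :=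
    ae_all_iff.2 fun q ↦ hμ.ae_iInf_density_eq_zero (fun _ ↦ measurableSet_Ioc)
      (Monotone.directed_ge fun _ _ h ↦ Ioc_subset_Ioc_right (by exact_mod_cast h))
      (Real.iInter_Ioc_rat_gt q)
  filter_upwards [hμ.ae_density_Iic_eq_add_density_Ioc, hμ.ae_density_Iic_add_density_Ioi,
    hIoi_zero, hIic_zero, hIoc_zero] with t hIoc hIoi hIoi_zero hIic_zero hIoc_zero
  refine isRatStieltjesPoint_toReal (f := fun t q ↦ hμ.density (Iic (q : ℝ)) t)
    (fun q r hqr ↦ (hIoc q r hqr).trans_ge le_self_add) ?_ hIic_zero fun q ↦ ?_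
  · have hsub (q : ℚ) : hμ.density (Iic (q : ℝ)) t = 1 - hμ.density (Ioi (q : ℝ)) t :=
      ENNReal.eq_sub_of_add_eq (ne_top_of_le_ne_top ENNReal.one_ne_top (hIoi q ▸ le_add_self))
        (hIoi q)
    simp_rw [hsub, ← ENNReal.sub_iInf, hIoi_zero, tsub_zero]
  · rw [iInf_congr fun r : Ioi q ↦ hIoc q r (le_of_lt r.2), ← ENNReal.add_iInf, hIoc_zero q,
      add_zero]

noncomputable def kernel : Kernel ℝ≥0 ℝ where
  toFun t := (stieltjesOfMeasurableRat hμ.ratCDF hμ.measurable_ratCDF t).measure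
  measurable' := measurable_measure_stieltjesOfMeasurableRat _

instance : IsMarkovKernel hμ.kernel :=
  ⟨fun t ↦ inferInstanceAs (IsProbabilityMeasure (stieltjesOfMeasurableRat _ _ t).measure)⟩

lemma ae_kernel_Iic_eq_density (q : ℚ) :
    ∀ᵐ t ∂hμ.timeMeasure univ, hμ.kernel t (Iic (q : ℝ)) = hμ.density (Iic (q : ℝ)) t := by
  filter_upwards [hμ.ae_isRatStieltjesPoint,
    Measure.rnDeriv_lt_top (hμ.timeMeasure (Iic (q : ℝ))) _] with t ht hfin
  rw [kernel, Kernel.coe_mk, measure_stieltjesOfMeasurableRat_Iic, stieltjesOfMeasurableRat_eq,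
    toRatCDF_of_isRatStieltjesPoint ht, ratCDF]
  exact ENNReal.ofReal_toReal hfin.ne

lemma setLIntegral_kernel (t : ℝ≥0) {B : Set ℝ} (hB : MeasurableSet B) :
    ∫⁻ s in Iic t, hμ.kernel s B ∂hμ.timeMeasure univ = μ t B := by
  have : IsFiniteMeasure ((hμ.timeMeasure univ).restrict (Iic t)) :=
    isFiniteMeasure_restrict.2 (by rw [hμ.timeMeasure_Iic .univ]; exact ENNReal.coe_ne_top)
  suffices h : hμ.kernel ∘ₘ (hμ.timeMeasure univ).restrict (Iic t) = μ t by
    rw [← Measure.bind_apply hB hμ.kernel.measurable.aemeasurable, h,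
      FiniteMeasure.ennreal_coeFn_eq_coeFn_toMeasure]
  refine ext_of_generate_finite _ Real.borel_eq_generateFrom_Iic_rat Real.isPiSystem_Iic_rat
    ?_ ?_
  · simp only [mem_iUnion, mem_singleton_iff]
    rintro _ ⟨q, rfl⟩
    rw [Measure.bind_apply measurableSet_Iic hμ.kernel.measurable.aemeasurable,
      lintegral_congr_ae (ae_restrict_of_ae (hμ.ae_kernel_Iic_eq_density q)),
      hμ.setLIntegral_density measurableSet_Iic, hμ.timeMeasure_Iic measurableSet_Iic,
      FiniteMeasure.ennreal_coeFn_eq_coeFn_toMeasure]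
  · rw [Measure.bind_apply .univ hμ.kernel.measurable.aemeasurable]
    simp_rw [measure_univ, setLIntegral_one]
    rw [hμ.timeMeasure_Iic .univ, FiniteMeasure.ennreal_coeFn_eq_coeFn_toMeasure]

end IsMeasureValuedCDF

theorem IsMeasureValuedCDF.exists_measure_prod_Iic [StandardBorelSpace X] [Nonempty X]
    {μ : ℝ≥0 → FiniteMeasure X} (hμ : IsMeasureValuedCDF μ) :
    ∃ ν : Measure (ℝ≥0 × X), SigmaFinite ν ∧
      ∀ t A, MeasurableSet A → ν (Iic t ×ˢ A) = μ t A := by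
  have he := measurableEmbedding_embeddingReal X
  obtain ⟨g, hg, hge⟩ := he.exists_measurable_extend measurable_id fun _ ↦ inferInstance
  have hμℝ := hμ.map he.measurable
  have hν : ∀ t A, MeasurableSet A →
      (hμℝ.timeMeasure univ ⊗ₘ hμℝ.kernel.map g) (Iic t ×ˢ A) = μ t A := by
    intro t A hA
    simp_rw [Measure.compProd_apply_prod measurableSet_Iic hA, Kernel.map_apply' _ hg _ hA,
      hμℝ.setLIntegral_kernel t (hg hA), FiniteMeasure.map_apply _ he.measurable (hg hA),
      ← preimage_comp, hge, preimage_id]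
  refine ⟨_, sigmaFinite_of_measure_Iic_prod_univ_ne_top fun t ↦ ?_, hν⟩
  rw [hν t univ .univ]
  exact ENNReal.coe_ne_top

theorem markovian_projection_stmt0_general (d : ℕ)
    (μ : ℝ≥0 → FiniteMeasure (Fin d → ℝ))
    (h0 : μ 0 = 0)
    (hcont : Continuous μ)
    (hmono : ∀ s t : ℝ≥0, s ≤ t →
      ∀ A : Set (Fin d → ℝ), MeasurableSet A → μ s A ≤ μ t A) :
    ∃ ν : Measure (ℝ≥0 × (Fin d → ℝ)), SigmaFinite ν ∧
      ∀ (t : ℝ≥0) (A : Set (Fin d → ℝ)), MeasurableSet A →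
        ν (Set.Iic t ×ˢ A) = (μ t A : ℝ≥0∞) := by
  have hμ : IsMeasureValuedCDF μ :=
    { zero := h0
      mono := fun s t hst ↦ Measure.le_iff.2 fun A hA ↦ by
        rw [← FiniteMeasure.ennreal_coeFn_eq_coeFn_toMeasure,
          ← FiniteMeasure.ennreal_coeFn_eq_coeFn_toMeasure]
        exact_mod_cast hmono s t hst A hA
      continuous_mass := FiniteMeasure.continuous_mass.comp hcont }
  exact hμ.exists_measure_prod_Iic

/-- **Lemma 3.9.** If `μ : [0,∞) → M₊(ℝ^d)` is weakly continuous, nondecreasing and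
`μ 0 = 0`, then there is a σ-finite Borel measure `ν` on `[0,∞) × ℝ^d` with
`ν([0,t] × A) = μ_t(A)` for all `t ≥ 0` and Borel `A`. -/
theorem markovian_projection_stmt0 (d : ℕ) (hd : 1 ≤ d)
    (μ : ℝ≥0 → FiniteMeasure (Fin d → ℝ))
    (h0 : μ 0 = 0)
    (hcont : Continuous μ)
    (hmono : ∀ s t : ℝ≥0, s ≤ t →
      ∀ A : Set (Fin d → ℝ), MeasurableSet A → μ s A ≤ μ t A) :
    ∃ ν : Measure (ℝ≥0 × (Fin d → ℝ)), SigmaFinite ν ∧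
      ∀ (t : ℝ≥0) (A : Set (Fin d → ℝ)), MeasurableSet A →
        ν (Set.Iic t ×ˢ A) = (μ t A : ℝ≥0∞) :=
  markovian_projection_stmt0_general d μ h0 hcont hmono
end

section
/- Let d ≥ 1 and let μ : [0,∞) → M₊(ℝ^d) be continuous for the topology of weak convergence and nondecreasing. Suppose 0 ≤ s ≤ t < ∞, 0 ≤ sᵢ ≤ tᵢ < ∞ for i ∈ ℕ, A and all Aᵢ are Borel subsets of ℝ^d, and [s,t) × A = ⋃_{i∈ℕ} ([sᵢ,tᵢ) × Aᵢ) where the sets [sᵢ,tᵢ) × Aᵢ are pairwise disjoint. Then μ_t(A) − μ_s(A) = Σ_{i∈ℕ} (μ_{tᵢ}(Aᵢ) − μ_{sᵢ}(Aᵢ)). -/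
/-!
For a nondecreasing family, `μ_b(B) − μ_a(B)` is the value at `B` of the measure `μ_b − μ_a`,
and `t ↦ μ_t(B)` is continuous because its increments are dominated by those of the
continuous total mass. The measures `gridMeasure μ n` on `ℝ≥0 × Ω`, which put the increment
of `μ` over `[k/(n+1), (k+1)/(n+1))` at the point `k/(n+1)`, have values on `[a,b) × B`
converging to `μ_b(B) − μ_a(B)`; so increments are finitely sub- and superadditive on
rectangles, and superadditivity passes to countable disjoint families.
Countable subadditivity is the compactness argument: shrink `[s,t) × A` to a compact
`[s,t'] × K` and enlarge each `[sᵢ,tᵢ) × Aᵢ` to an open `Vᵢ × Uᵢ ⊆ [sᵢ',tᵢ) × Uᵢ`, losing at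
most `εᵢ` in each step (inner and outer regularity in space, continuity in time); a finite
subcover reduces to finite subadditivity.
-/

open MeasureTheory Filter Topology Set
open scoped NNReal ENNReal

lemma Finset.sum_Ico_tsub {M : Type*} [AddCommMonoid M] [PartialOrder M] [CanonicallyOrderedAdd M]
    [Sub M] [OrderedSub M] {f : ℕ → M} (hf : Monotone f) (m n : ℕ) :
    ∑ k ∈ Finset.Ico m n, (f (k + 1) - f k) = f n - f m := by
  rcases le_total m n with hmn | hnm
  · induction n, hmn using Nat.le_induction with
    | base => simp
    | succ n hmn ih =>
      rw [Finset.sum_Ico_succ_top hmn, ih, add_comm]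
      exact tsub_add_tsub_cancel (hf n.le_succ) (hf hmn)
  · rw [Finset.Ico_eq_empty_of_le hnm, Finset.sum_empty, tsub_eq_zero_of_le (hf hnm)]

lemma Continuous.of_dist_le_dist {X Y Z : Type*} [TopologicalSpace X] [PseudoMetricSpace Y]
    [PseudoMetricSpace Z] {f : X → Y} {g : X → Z} (hg : Continuous g)
    (hfg : ∀ x y, dist (f x) (f y) ≤ dist (g x) (g y)) : Continuous f := by
  refine continuous_iff_continuousAt.2 fun x => tendsto_iff_dist_tendsto_zero.2 ?_
  exact squeeze_zero (fun _ => dist_nonneg) (fun y => hfg y x)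
    (tendsto_iff_dist_tendsto_zero.1 (hg.tendsto x))

lemma exists_Ico_subset_interior_Ico {α : Type*} [LinearOrder α] [TopologicalSpace α]
    [OrderTopology α] [OrderBot α] [DenselyOrdered α] {p : α → Prop} {a : α}
    (hp : ∀ᶠ x in 𝓝 a, p x) (b : α) : ∃ a', p a' ∧ Ico a b ⊆ interior (Ico a' b) := by
  rcases eq_bot_or_bot_lt a with rfl | ha
  · refine ⟨⊥, hp.self_of_nhds, ?_⟩
    rw [Ico_bot, isOpen_Iio.interior_eq]
  · have : (𝓝[<] a).NeBot := nhdsLT_neBot_of_exists_lt ⟨⊥, ha⟩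
    obtain ⟨a', ha'a, ha'⟩ :=
      ((eventually_mem_nhdsWithin (s := Iio a)).and (hp.filter_mono nhdsWithin_le_nhds)).exists
    refine ⟨a', ha', ?_⟩
    have hIoo : Ico a b ⊆ Ioo a' b := fun x hx => ⟨lt_of_lt_of_le ha'a hx.1, hx.2⟩
    exact hIoo.trans (isOpen_Ioo.subset_interior_iff.2 Ioo_subset_Ico_self)

noncomputable section MeasureIncrement

variable {Ω : Type*} [MeasurableSpace Ω] {μ : ℝ≥0 → FiniteMeasure Ω} {B : Set Ω}

def measureIncrement (μ : ℝ≥0 → FiniteMeasure Ω) (a b : ℝ≥0) : Measure Ω :=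
  (μ b : Measure Ω) - (μ a : Measure Ω)

instance (μ : ℝ≥0 → FiniteMeasure Ω) (a b : ℝ≥0) :
    IsFiniteMeasure (measureIncrement μ a b) := by
  unfold measureIncrement; infer_instance

def gridCeil (n : ℕ) (c : ℝ≥0) : ℝ≥0 := ⌈c * (n + 1)⌉₊ / (n + 1)

lemma tendsto_gridCeil (c : ℝ≥0) : Tendsto (fun n => gridCeil n c) atTop (𝓝 c) := by
  have hN (n : ℕ) : (0 : ℝ≥0) < n + 1 := by positivity
  have hupper : Tendsto (fun n : ℕ => c + 1 / (n + 1)) atTop (𝓝 c) := by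
    simpa using tendsto_const_nhds.add (tendsto_one_div_add_atTop_nhds_zero_nat (𝕜 := ℝ≥0))
  refine tendsto_of_tendsto_of_tendsto_of_le_of_le tendsto_const_nhds hupper
    (fun n => (le_div_iff₀ (hN n)).2 (Nat.le_ceil _)) (fun n => (div_le_iff₀ (hN n)).2 ?_)
  rw [add_mul, one_div, inv_mul_cancel₀ (hN n).ne']
  exact (Nat.ceil_lt_add_one (by positivity)).le

def gridMeasure (μ : ℝ≥0 → FiniteMeasure Ω) (n : ℕ) : Measure (ℝ≥0 × Ω) :=
  Measure.sum fun k : ℕ => (Measure.dirac ((k : ℝ≥0) / (n + 1))).prod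
    (measureIncrement μ (k / (n + 1)) ((k + 1) / (n + 1)))

variable (hμ : Monotone fun t => (μ t : Measure Ω))
include hμ

lemma measureIncrement_apply (a b : ℝ≥0) (hB : MeasurableSet B) :
    measureIncrement μ a b B = (μ b : Measure Ω) B - (μ a : Measure Ω) B := by
  rcases le_total a b with hab | hba
  · exact Measure.sub_apply hB (hμ hab)
  · rw [measureIncrement, Measure.sub_eq_zero_of_le (hμ hba), Measure.coe_zero, Pi.zero_apply,
      tsub_eq_zero_of_le (hμ hba B)]

lemma measureIncrement_le_add (a c b : ℝ≥0) (hB : MeasurableSet B) :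
    measureIncrement μ a b B ≤ measureIncrement μ a c B + measureIncrement μ c b B := by
  simp only [measureIncrement_apply hμ _ _ hB]
  exact tsub_le_tsub_add_tsub.trans_eq (add_comm _ _)

lemma FiniteMeasure.dist_apply_le_dist_mass (u v : ℝ≥0) (hB : MeasurableSet B) :
    dist (μ u B) (μ v B) ≤ dist (μ u).mass (μ v).mass := by
  wlog huv : u ≤ v generalizing u v
  · rw [dist_comm, dist_comm (μ u).mass]
    exact this v u (le_of_not_ge huv)
  have hB_le : μ u B ≤ μ v B := by
    rw [← ENNReal.coe_le_coe]
    simpa only [FiniteMeasure.ennreal_coeFn_eq_coeFn_toMeasure] using hμ huv B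
  have hcompl : μ v B + (μ u).mass ≤ μ u B + (μ v).mass := by
    rw [← ENNReal.coe_le_coe]
    push_cast [FiniteMeasure.ennreal_mass, FiniteMeasure.ennreal_coeFn_eq_coeFn_toMeasure]
    rw [← measure_add_measure_compl hB, ← measure_add_measure_compl (μ := (μ v : Measure Ω)) hB,
      add_left_comm]
    gcongr
    exact hμ huv
  have hcompl' : (μ v B : ℝ) + (μ u).mass ≤ μ u B + (μ v).mass := by exact_mod_cast hcompl
  rw [NNReal.dist_eq, NNReal.dist_eq, abs_sub_comm, abs_sub_comm ((μ u).mass : ℝ),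
    abs_of_nonneg (sub_nonneg.2 (NNReal.coe_le_coe.2 hB_le))]
  exact (by linarith : _ ≤ ((μ v).mass : ℝ) - (μ u).mass).trans (le_abs_self _)

lemma gridMeasure_Ico_prod (n : ℕ) (a b : ℝ≥0) (hB : MeasurableSet B) :
    gridMeasure μ n (Ico a b ×ˢ B) = measureIncrement μ (gridCeil n a) (gridCeil n b) B := by
  set N : ℝ≥0 := n + 1
  have hN : 0 < N := by positivity
  set g : ℕ → ℝ≥0∞ := fun k => (μ (k / N) : Measure Ω) B
  have hg : Monotone g := fun i j hij => hμ (by gcongr) B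
  have hmem (k : ℕ) : (k : ℝ≥0) / N ∈ Ico a b ↔ k ∈ Finset.Ico ⌈a * N⌉₊ ⌈b * N⌉₊ := by
    rw [Set.mem_Ico, Finset.mem_Ico, Nat.ceil_le, Nat.lt_ceil, le_div_iff₀ hN, div_lt_iff₀ hN]
  have hcell (k : ℕ) : measureIncrement μ (k / N) ((k + 1) / N) B = g (k + 1) - g k := by
    simp only [measureIncrement_apply hμ _ _ hB, g, Nat.cast_add_one]
  rw [gridMeasure, Measure.sum_apply _ (measurableSet_Ico.prod hB),
    measureIncrement_apply hμ _ _ hB]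
  change _ = g ⌈b * N⌉₊ - g ⌈a * N⌉₊
  rw [← Finset.sum_Ico_tsub hg,
    tsum_eq_sum (s := Finset.Ico ⌈a * N⌉₊ ⌈b * N⌉₊)]
  · refine Finset.sum_congr rfl fun k hk => ?_
    rw [Measure.prod_prod, Measure.dirac_apply' _ measurableSet_Ico,
      indicator_of_mem ((hmem k).2 hk), Pi.one_apply, one_mul, hcell]
  · intro k hk
    rw [Measure.prod_prod, Measure.dirac_apply' _ measurableSet_Ico,
      indicator_of_notMem (fun h => hk ((hmem k).1 h)), zero_mul]

variable [TopologicalSpace Ω] [OpensMeasurableSpace Ω]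

lemma continuous_measure_apply (hc : Continuous μ) (hB : MeasurableSet B) :
    Continuous fun t => (μ t : Measure Ω) B := by
  have h : Continuous fun t => μ t B := (FiniteMeasure.continuous_mass.comp hc).of_dist_le_dist
    fun u v => FiniteMeasure.dist_apply_le_dist_mass hμ u v hB
  exact (ENNReal.continuous_coe.comp h).congr fun t =>
    FiniteMeasure.ennreal_coeFn_eq_coeFn_toMeasure _ _

lemma eventually_measureIncrement_univ_lt (hc : Continuous μ) (a : ℝ≥0) {δ : ℝ≥0∞}
    (hδ : 0 < δ) : ∀ᶠ u in 𝓝 a, measureIncrement μ u a univ < δ := by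
  have h : Tendsto (fun u => (μ a : Measure Ω) univ - (μ u : Measure Ω) univ) (𝓝 a) (𝓝 0) := by
    simpa using ENNReal.Tendsto.sub tendsto_const_nhds
      ((continuous_measure_apply hμ hc MeasurableSet.univ).tendsto a)
      (Or.inl (measure_ne_top (μ a : Measure Ω) univ))
  filter_upwards [h.eventually (gt_mem_nhds hδ)] with u hu
  rwa [measureIncrement_apply hμ _ _ MeasurableSet.univ]

lemma tendsto_gridMeasure_Ico_prod (hc : Continuous μ) (a b : ℝ≥0) (hB : MeasurableSet B) :
    Tendsto (fun n => gridMeasure μ n (Ico a b ×ˢ B)) atTop (𝓝 (measureIncrement μ a b B)) := by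
  have hend (c : ℝ≥0) : Tendsto (fun n => (μ (gridCeil n c) : Measure Ω) B) atTop
      (𝓝 ((μ c : Measure Ω) B)) :=
    ((continuous_measure_apply hμ hc hB).tendsto c).comp (tendsto_gridCeil c)
  simp only [gridMeasure_Ico_prod hμ _ _ _ hB, measureIncrement_apply hμ _ _ hB]
  exact ENNReal.Tendsto.sub (hend b) (hend a) (Or.inr (measure_ne_top _ _))

variable {ι : Type*} {a b : ℝ≥0} {as bs : ι → ℝ≥0} {Bs : ι → Set Ω}

lemma measureIncrement_le_sum_of_subset_biUnion (hc : Continuous μ) (hB : MeasurableSet B)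
    (hBs : ∀ i, MeasurableSet (Bs i)) {I : Finset ι}
    (hcover : Ico a b ×ˢ B ⊆ ⋃ i ∈ I, Ico (as i) (bs i) ×ˢ Bs i) :
    measureIncrement μ a b B ≤ ∑ i ∈ I, measureIncrement μ (as i) (bs i) (Bs i) :=
  le_of_tendsto_of_tendsto' (tendsto_gridMeasure_Ico_prod hμ hc a b hB)
    (tendsto_finsetSum I fun i _ => tendsto_gridMeasure_Ico_prod hμ hc _ _ (hBs i))
    fun _ => (measure_mono hcover).trans (measure_biUnion_finset_le I _)

lemma tsum_measureIncrement_le_of_iUnion_subset (hc : Continuous μ) (hB : MeasurableSet B)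
    (hBs : ∀ i, MeasurableSet (Bs i))
    (hdisj : Pairwise fun i j =>
      Disjoint (Ico (as i) (bs i) ×ˢ Bs i) (Ico (as j) (bs j) ×ˢ Bs j))
    (hsub : ⋃ i, Ico (as i) (bs i) ×ˢ Bs i ⊆ Ico a b ×ˢ B) :
    ∑' i, measureIncrement μ (as i) (bs i) (Bs i) ≤ measureIncrement μ a b B := by
  rw [ENNReal.tsum_eq_iSup_sum]
  refine iSup_le fun I => le_of_tendsto_of_tendsto'
    (tendsto_finsetSum I fun i _ => tendsto_gridMeasure_Ico_prod hμ hc _ _ (hBs i))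
    (tendsto_gridMeasure_Ico_prod hμ hc a b hB) fun n => ?_
  rw [← measure_biUnion_finset (hdisj.set_pairwise _) fun i _ => measurableSet_Ico.prod (hBs i)]
  exact measure_mono
    ((iUnion₂_subset fun i _ => subset_iUnion (fun i => Ico (as i) (bs i) ×ˢ Bs i) i).trans hsub)

end MeasureIncrement

section Regularity

variable {Ω : Type*} [TopologicalSpace Ω] [PolishSpace Ω] [MeasurableSpace Ω] [BorelSpace Ω]
  {μ : ℝ≥0 → FiniteMeasure Ω} {B : Set Ω}

variable (hμ : Monotone fun t => (μ t : Measure Ω)) (hc : Continuous μ)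
include hμ hc

lemma exists_isOpen_superset_measureIncrement_le (a b : ℝ≥0) (B : Set Ω) {ε : ℝ≥0∞}
    (hε : 0 < ε) : ∃ a' U, Ico a b ⊆ interior (Ico a' b) ∧ IsOpen U ∧ B ⊆ U ∧
      measureIncrement μ a' b U ≤ measureIncrement μ a b B + ε := by
  obtain ⟨U, hBU, hU, hUε⟩ := B.exists_isOpen_lt_add (μ := measureIncrement μ a b)
    (measure_ne_top _ _) (ENNReal.half_pos hε.ne').ne'
  obtain ⟨a', ha'ε, hIco⟩ := exists_Ico_subset_interior_Ico
    (eventually_measureIncrement_univ_lt hμ hc a (ENNReal.half_pos hε.ne')) b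
  refine ⟨a', U, hIco, hU, hBU, ?_⟩
  calc measureIncrement μ a' b U
      ≤ measureIncrement μ a' a U + measureIncrement μ a b U :=
        measureIncrement_le_add hμ a' a b hU.measurableSet
    _ ≤ ε / 2 + (measureIncrement μ a b B + ε / 2) :=
        add_le_add ((measure_mono (subset_univ U)).trans ha'ε.le) hUε.le
    _ = measureIncrement μ a b B + ε := by rw [add_left_comm, ENNReal.add_halves]

lemma exists_isCompact_subset_le_measureIncrement_add {a b : ℝ≥0} (hb : 0 < b)
    (hB : MeasurableSet B) {ε : ℝ≥0∞} (hε : 0 < ε) :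
    ∃ b' < b, ∃ K ⊆ B, IsCompact K ∧
      measureIncrement μ a b B ≤ measureIncrement μ a b' K + ε := by
  obtain ⟨K, hKB, hK, hKε⟩ := hB.exists_isCompact_lt_add (μ := measureIncrement μ a b)
    (measure_ne_top _ _) (ENNReal.half_pos hε.ne').ne'
  have : (𝓝[<] b).NeBot := nhdsLT_neBot_of_exists_lt ⟨0, hb⟩
  obtain ⟨b', hb'b, hb'ε⟩ := ((eventually_mem_nhdsWithin (s := Iio b)).and
    ((eventually_measureIncrement_univ_lt hμ hc b (ENNReal.half_pos hε.ne')).filter_mono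
      nhdsWithin_le_nhds)).exists
  refine ⟨b', hb'b, K, hKB, hK, ?_⟩
  calc measureIncrement μ a b B
      ≤ measureIncrement μ a b K + ε / 2 := hKε.le
    _ ≤ measureIncrement μ a b' K + measureIncrement μ b' b K + ε / 2 := by
        gcongr; exact measureIncrement_le_add hμ a b' b hK.measurableSet
    _ ≤ measureIncrement μ a b' K + ε / 2 + ε / 2 := by
        gcongr; exact (measure_mono (subset_univ K)).trans hb'ε.le
    _ = measureIncrement μ a b' K + ε := by rw [add_assoc, ENNReal.add_halves]

theorem measureIncrement_le_tsum_of_subset_iUnion {ι : Type*} [Countable ι] {a b : ℝ≥0}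
    {as bs : ι → ℝ≥0} {Bs : ι → Set Ω} (hB : MeasurableSet B)
    (hcover : Ico a b ×ˢ B ⊆ ⋃ i, Ico (as i) (bs i) ×ˢ Bs i) :
    measureIncrement μ a b B ≤ ∑' i, measureIncrement μ (as i) (bs i) (Bs i) := by
  rcases le_or_gt b a with hba | hab
  · simp [measureIncrement, Measure.sub_eq_zero_of_le (hμ hba)]
  refine ENNReal.le_of_forall_pos_le_add fun ε hε _ => ?_
  have hε2 : (0 : ℝ≥0∞) < ε / 2 := ENNReal.half_pos (ENNReal.coe_pos.2 hε).ne'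
  obtain ⟨δ, hδ, hδsum⟩ := ENNReal.exists_pos_sum_of_countable hε2.ne' ι
  obtain ⟨b', hb'b, K, hKB, hK, hBK⟩ :=
    exists_isCompact_subset_le_measureIncrement_add hμ hc (a := a) (pos_of_gt hab) hB hε2
  choose a' U hIco hU hBU hUδ using fun i =>
    exists_isOpen_superset_measureIncrement_le hμ hc (as i) (bs i) (Bs i)
      (ENNReal.coe_pos.2 (hδ i))
  have hKcover : Icc a b' ×ˢ K ⊆ ⋃ i, interior (Ico (a' i) (bs i)) ×ˢ U i := by
    rintro ⟨r, x⟩ ⟨hr, hx⟩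
    obtain ⟨i, hi⟩ := mem_iUnion.1 (hcover ⟨⟨hr.1, hr.2.trans_lt hb'b⟩, hKB hx⟩)
    exact mem_iUnion.2 ⟨i, hIco i hi.1, hBU i hi.2⟩
  obtain ⟨I, hI⟩ := (isCompact_Icc.prod hK).elim_finite_subcover _
    (fun i => isOpen_interior.prod (hU i)) hKcover
  have hIcover : Ico a b' ×ˢ K ⊆ ⋃ i ∈ I, Ico (a' i) (bs i) ×ˢ U i :=
    (Set.prod_mono Ico_subset_Icc_self Subset.rfl).trans
      (hI.trans (iUnion₂_mono fun i _ => Set.prod_mono interior_subset Subset.rfl))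
  calc measureIncrement μ a b B
      ≤ measureIncrement μ a b' K + ε / 2 := hBK
    _ ≤ ∑ i ∈ I, measureIncrement μ (a' i) (bs i) (U i) + ε / 2 := by
        gcongr
        exact measureIncrement_le_sum_of_subset_biUnion hμ hc hK.measurableSet
          (fun i => (hU i).measurableSet) hIcover
    _ ≤ ∑ i ∈ I, (measureIncrement μ (as i) (bs i) (Bs i) + δ i) + ε / 2 := by
        gcongr with i; exact hUδ i
    _ ≤ ∑' i, measureIncrement μ (as i) (bs i) (Bs i) + ∑' i, (δ i : ℝ≥0∞) + ε / 2 := by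
        rw [Finset.sum_add_distrib]; gcongr <;> exact ENNReal.sum_le_tsum I
    _ ≤ ∑' i, measureIncrement μ (as i) (bs i) (Bs i) + ε := by
        rw [add_assoc]; gcongr
        exact (add_le_add hδsum.le le_rfl).trans_eq (ENNReal.add_halves _)

end Regularity

theorem markovian_projection_stmt2_general (d : ℕ)
    (μ : ℝ≥0 → FiniteMeasure (Fin d → ℝ))
    (hcont : Continuous μ)
    (hmono : ∀ s t : ℝ≥0, s ≤ t →
      ∀ A : Set (Fin d → ℝ), MeasurableSet A → μ s A ≤ μ t A)
    (s t : ℝ≥0)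
    (sseq tseq : ℕ → ℝ≥0)
    (A : Set (Fin d → ℝ)) (hA : MeasurableSet A)
    (Aseq : ℕ → Set (Fin d → ℝ)) (hAseq : ∀ i, MeasurableSet (Aseq i))
    (hunion : Set.Ico s t ×ˢ A = ⋃ i, Set.Ico (sseq i) (tseq i) ×ˢ Aseq i)
    (hdisj : Pairwise fun i j =>
      Disjoint (Set.Ico (sseq i) (tseq i) ×ˢ Aseq i)
        (Set.Ico (sseq j) (tseq j) ×ˢ Aseq j)) :
    (μ t A : ℝ≥0∞) - (μ s A : ℝ≥0∞) =
      ∑' i, ((μ (tseq i) (Aseq i) : ℝ≥0∞) - (μ (sseq i) (Aseq i) : ℝ≥0∞)) := by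
  have hμ : Monotone fun t => (μ t : Measure (Fin d → ℝ)) := fun u v huv =>
    Measure.le_iff.2 fun B hB => by
      simpa only [FiniteMeasure.ennreal_coeFn_eq_coeFn_toMeasure]
        using ENNReal.coe_le_coe.2 (hmono u v huv B hB)
  have hincrement (u v : ℝ≥0) {B : Set (Fin d → ℝ)} (hB : MeasurableSet B) :
      (μ v B : ℝ≥0∞) - μ u B = measureIncrement μ u v B := by
    simp only [measureIncrement_apply hμ u v hB, FiniteMeasure.ennreal_coeFn_eq_coeFn_toMeasure]
  rw [hincrement s t hA, tsum_congr fun i => hincrement _ _ (hAseq i)]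
  exact le_antisymm (measureIncrement_le_tsum_of_subset_iUnion hμ hcont hA hunion.subset)
    (tsum_measureIncrement_le_of_iUnion_subset hμ hcont hA hAseq hdisj hunion.symm.subset)

/-- Countable additivity on half-open rectangles: if `[s,t) × A` is the disjoint
countable union of the rectangles `[sᵢ,tᵢ) × Aᵢ`, then
`μ_t(A) − μ_s(A) = Σᵢ (μ_{tᵢ}(Aᵢ) − μ_{sᵢ}(Aᵢ))`, for a weakly continuous
nondecreasing family `μ` of finite measures on `ℝ^d`. -/
theorem markovian_projection_stmt2 (d : ℕ) (hd : 1 ≤ d)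
    (μ : ℝ≥0 → FiniteMeasure (Fin d → ℝ))
    (hcont : Continuous μ)
    (hmono : ∀ s t : ℝ≥0, s ≤ t →
      ∀ A : Set (Fin d → ℝ), MeasurableSet A → μ s A ≤ μ t A)
    (s t : ℝ≥0) (hst : s ≤ t)
    (sseq tseq : ℕ → ℝ≥0) (hseq : ∀ i, sseq i ≤ tseq i)
    (A : Set (Fin d → ℝ)) (hA : MeasurableSet A)
    (Aseq : ℕ → Set (Fin d → ℝ)) (hAseq : ∀ i, MeasurableSet (Aseq i))
    (hunion : Set.Ico s t ×ˢ A = ⋃ i, Set.Ico (sseq i) (tseq i) ×ˢ Aseq i)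
    (hdisj : Pairwise fun i j =>
      Disjoint (Set.Ico (sseq i) (tseq i) ×ˢ Aseq i)
        (Set.Ico (sseq j) (tseq j) ×ˢ Aseq j)) :
    (μ t A : ℝ≥0∞) - (μ s A : ℝ≥0∞) =
      ∑' i, ((μ (tseq i) (Aseq i) : ℝ≥0∞) - (μ (sseq i) (Aseq i) : ℝ≥0∞)) :=
  markovian_projection_stmt2_general d μ hcont hmono s t sseq tseq A hA Aseq hAseq hunion hdisj
end

section
/- Let E₁, E₂, E₃ be Polish spaces and let f : E₂ → E₃ be a Borel measurable function. For m ∈ ℕ ∪ {∞}, let (Yᵐ, Zᵐ) be an (E₁ × E₂)-valued random variable on a probability space (Ωᵐ, ℙᵐ). Suppose that, as m → ∞, the law of (Yᵐ, Zᵐ) converges weakly to the law of (Y^∞, Z^∞), and the law of (Zᵐ, f(Zᵐ)) converges weakly to the law of (Z^∞, f(Z^∞)). Then the law of (Yᵐ, Zᵐ, f(Zᵐ)) on E₁ × E₂ × E₃ converges weakly to the law of (Y^∞, Z^∞, f(Z^∞)) as m → ∞. -/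
/-!
By Lusin's theorem, `f` is continuous on a compact set `K` carrying all but `ε` of the limit law
of `Z`. Given an open `G ⊆ E₁ × E₂ × E₃`, approximate `{(y, z) | (y, z, f z) ∈ G}` from inside by
a compact set `C`. The tube lemma, applied to `C` and to the compact graph of `f` over `K`, gives
open sets `U ⊇ C` and `V ⊇ graph (f|K)` such that `(y, z) ∈ U` and `(z, f z) ∈ V` force
`(y, z, f z) ∈ G`. The portmanteau theorem for `U` (first convergence) and for the closed set `Vᶜ`,
which the limit law of `(Z, f Z)` almost ignores (second convergence), yields
`P(G) ≤ liminf Pₘ(G) + 2ε` for the laws of `(Y, Z, f Z)`, hence weak convergence.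
-/

open MeasureTheory Filter Topology
open scoped NNReal ENNReal BoundedContinuousFunction

theorem ENNReal.liminf_add_le_liminf_add_limsup {ι : Type*} {F : Filter ι} (u v : ι → ℝ≥0∞) :
    F.liminf (u + v) ≤ F.liminf u + F.limsup v := by
  rcases F.eq_or_neBot with rfl | _
  · simp
  refine ENNReal.le_of_forall_pos_le_add fun ε hε hlt => ?_
  have hv : ∀ᶠ i in F, v i ≤ F.limsup v + ε :=
    (eventually_lt_of_limsup_lt (ENNReal.lt_add_right (ne_top_of_lt (le_add_self.trans_lt hlt))
      (by exact_mod_cast hε.ne'))).mono fun _ => le_of_lt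
  calc F.liminf (u + v) ≤ F.liminf (fun i => u i + (F.limsup v + ε)) :=
        liminf_le_liminf (hv.mono fun i hi => add_le_add_right hi (u i))
    _ = F.liminf u + F.limsup v + ε := by
        rw [liminf_add_const F u _ (by isBoundedDefault) (by isBoundedDefault), add_assoc]

theorem Measurable.exists_isCompact_continuousOn_measure_compl_le {α β : Type*}
    [t : TopologicalSpace α] [ht : PolishSpace α] [MeasurableSpace α] [BorelSpace α]
    [TopologicalSpace β] [SecondCountableTopology β] [MeasurableSpace β]
    [OpensMeasurableSpace β] {f : α → β} (hf : Measurable f) (μ : Measure α) [IsFiniteMeasure μ]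
    {ε : ℝ≥0∞} (hε : 0 < ε) : ∃ K, IsCompact K ∧ ContinuousOn f K ∧ μ Kᶜ ≤ ε := by
  -- A finer Polish topology `t'` with the same Borel sets makes `f` continuous; `t'`-compact sets
  -- are `t`-compact, and on them `t'` and `t` coincide.
  obtain ⟨t', ht't, hft', ht'⟩ := hf.exists_continuous
  have h_borel : @BorelSpace α t' _ :=
    ⟨(@BorelSpace.measurable_eq α t _ _).trans (borel_eq_borel_of_le ht' ht ht't).symm⟩
  obtain ⟨K, hK', hμK⟩ := isTightMeasureSet_iff_exists_isCompact_measure_compl_le.1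
    (isTightMeasureSet_singleton (μ := μ)) ε hε
  have h_image {s : Set α} (hs : @IsCompact α t' s) : @IsCompact α t s := by
    simpa using @IsCompact.image α α t' t s id hs (continuous_id_of_le ht't)
  refine ⟨K, h_image hK', (@continuousOn_iff_isClosed α β t _ f K).2 fun C hC => ?_, hμK μ rfl⟩
  refine ⟨f ⁻¹' C ∩ K, ?_, by rw [Set.inter_assoc, Set.inter_self]⟩
  exact @IsCompact.isClosed α t _ _ (h_image (hK'.inter_left (hC.preimage hft')))

theorem exists_isOpen_tube_of_graph {X Y W : Type*} [TopologicalSpace X] [TopologicalSpace Y]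
    [T2Space Y] [TopologicalSpace W] {f : Y → W} {K : Set Y} {L : Set (X × Y)}
    {G : Set (X × Y × W)} (hK : IsCompact K) (hf : ContinuousOn f K) (hL : IsCompact L)
    (hG : IsOpen G) (hLG : ∀ p ∈ L, (p.1, p.2, f p.2) ∈ G) :
    ∃ U V, IsOpen U ∧ IsOpen V ∧ L ⊆ U ∧ (fun y => (y, f y)) '' K ⊆ V ∧
      ∀ p ∈ U, (p.2, f p.2) ∈ V → (p.1, p.2, f p.2) ∈ G := by
  have hΓ : IsCompact ((fun y => (y, f y)) '' K) :=
    hK.image_of_continuousOn (continuousOn_id.prodMk hf)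
  -- The points `(p, (p.2, f p.2))` lie on the closed set `{q | q.2.1 = q.1.2}`, and there
  -- membership in `N` means `(p.1, p.2, f p.2) ∈ G`.
  set N : Set ((X × Y) × (Y × W)) := {q | q.2.1 = q.1.2}ᶜ ∪ {q | (q.1.1, q.2) ∈ G}
  have hN : IsOpen N :=
    (isClosed_eq (by fun_prop) (by fun_prop)).isOpen_compl.union (hG.preimage (by fun_prop))
  obtain ⟨U, V, hU, hV, hLU, hΓV, hUV⟩ := generalized_tube_lemma hL hΓ hN <| by
    rintro ⟨p, _, _⟩ ⟨hp, y, -, hy⟩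
    obtain ⟨rfl, rfl⟩ := Prod.ext_iff.1 hy
    by_cases h : y = p.2
    · subst h
      exact Or.inr (hLG p hp)
    · exact Or.inl h
  refine ⟨U, V, hU, hV, hLU, hΓV, fun p hp hpV => ?_⟩
  exact (hUV (Set.mk_mem_prod hp hpV)).resolve_left fun h => h rfl

theorem MeasureTheory.ProbabilityMeasure.map_map {α β γ : Type*} [MeasurableSpace α]
    [MeasurableSpace β] [MeasurableSpace γ] (μ : ProbabilityMeasure α) {f : α → β} {g : β → γ}
    (hg : Measurable g) (hf : Measurable f) :
    (μ.map hf.aemeasurable).map hg.aemeasurable = μ.map (hg.comp hf).aemeasurable :=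
  Subtype.ext (Measure.map_map hg hf)

theorem MeasureTheory.ProbabilityMeasure.tendsto_map_iff_forall_integral_tendsto
    {ι E : Type*} {L : Filter ι} [TopologicalSpace E] [MeasurableSpace E]
    [OpensMeasurableSpace E] {Ω : ι → Type*} [∀ i, MeasurableSpace (Ω i)] {Ω' : Type*}
    [MeasurableSpace Ω'] (P : ∀ i, ProbabilityMeasure (Ω i)) (P' : ProbabilityMeasure Ω')
    {X : ∀ i, Ω i → E} {X' : Ω' → E} (hX : ∀ i, Measurable (X i)) (hX' : Measurable X') :
    Tendsto (fun i => (P i).map (hX i).aemeasurable) L (𝓝 (P'.map hX'.aemeasurable)) ↔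
      ∀ g : E →ᵇ ℝ, Tendsto (fun i => ∫ ω, g (X i ω) ∂(P i)) L (𝓝 (∫ ω, g (X' ω) ∂P')) := by
  simp only [tendsto_iff_forall_integral_tendsto, toMeasure_map]
  refine forall_congr' fun g => ?_
  have h_map i : ∫ x, g x ∂(P i : Measure (Ω i)).map (X i) = ∫ ω, g (X i ω) ∂(P i) :=
    integral_map (hX i).aemeasurable g.continuous.aestronglyMeasurable
  rw [integral_map hX'.aemeasurable g.continuous.aestronglyMeasurable]
  simp only [h_map]

theorem MeasureTheory.ProbabilityMeasure.tendsto_map_map_iff_forall_integral_tendsto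
    {ι E F : Type*} {L : Filter ι} [MeasurableSpace E] [TopologicalSpace F] [MeasurableSpace F]
    [OpensMeasurableSpace F] {Ω : ι → Type*} [∀ i, MeasurableSpace (Ω i)] {Ω' : Type*}
    [MeasurableSpace Ω'] (P : ∀ i, ProbabilityMeasure (Ω i)) (P' : ProbabilityMeasure Ω')
    {X : ∀ i, Ω i → E} {X' : Ω' → E} (hX : ∀ i, Measurable (X i)) (hX' : Measurable X')
    {φ : E → F} (hφ : Measurable φ) :
    Tendsto (fun i => ((P i).map (hX i).aemeasurable).map hφ.aemeasurable) L
        (𝓝 ((P'.map hX'.aemeasurable).map hφ.aemeasurable)) ↔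
      ∀ g : F →ᵇ ℝ,
        Tendsto (fun i => ∫ ω, g (φ (X i ω)) ∂(P i)) L (𝓝 (∫ ω, g (φ (X' ω)) ∂P')) := by
  simp only [map_map _ hφ (hX _), map_map _ hφ hX']
  exact tendsto_map_iff_forall_integral_tendsto P P' (fun i => hφ.comp (hX i)) (hφ.comp hX')

section GraphExtension

variable {X Y W : Type*}
  [TopologicalSpace X] [PolishSpace X] [MeasurableSpace X] [BorelSpace X]
  [TopologicalSpace Y] [PolishSpace Y] [MeasurableSpace Y] [BorelSpace Y]
  [TopologicalSpace W] [PolishSpace W] [MeasurableSpace W] [BorelSpace W]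
  {ι : Type*} {L : Filter ι} {f : Y → W} (hf : Measurable f)
  {ν : ι → ProbabilityMeasure (X × Y)} {ν' : ProbabilityMeasure (X × Y)}

include hf in
theorem measure_preimage_le_liminf_of_tendsto (h1 : Tendsto ν L (𝓝 ν'))
    (h2 : Tendsto
      (fun i => (ν i).map (measurable_snd.prodMk (hf.comp measurable_snd)).aemeasurable) L
      (𝓝 (ν'.map (measurable_snd.prodMk (hf.comp measurable_snd)).aemeasurable)))
    {G : Set (X × Y × W)} (hG : IsOpen G) :
    (ν' : Measure (X × Y)) ((fun p => (p.1, p.2, f p.2)) ⁻¹' G) ≤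
      L.liminf fun i => (ν i : Measure (X × Y)) ((fun p => (p.1, p.2, f p.2)) ⁻¹' G) := by
  set A := (fun p : X × Y => (p.1, p.2, f p.2)) ⁻¹' G
  have hA : MeasurableSet A := hG.measurableSet.preimage (by fun_prop)
  refine ENNReal.le_of_forall_pos_le_add fun ε hε _ => ?_
  set η : ℝ≥0∞ := ε / 2
  have hη : 0 < η := ENNReal.half_pos (by exact_mod_cast hε.ne')
  obtain ⟨K, hK, hfK, hKη⟩ :=
    hf.exists_isCompact_continuousOn_measure_compl_le ((ν' : Measure (X × Y)).map Prod.snd) hη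
  obtain ⟨C, hCA, hC, hACη⟩ :=
    hA.exists_isCompact_sdiff_lt (μ := ν') (measure_ne_top _ _) hη.ne'
  obtain ⟨U, V, hU, hV, hCU, hKV, hUV⟩ :=
    exists_isOpen_tube_of_graph hK hfK hC hG fun p hp => hCA hp
  set B := (fun p : X × Y => (p.2, f p.2)) ⁻¹' Vᶜ
  have hB : L.limsup (fun i => (ν i : Measure (X × Y)) B) ≤ η := by
    have hψ : Measurable fun p : X × Y => (p.2, f p.2) := by fun_prop
    have h_closed := ProbabilityMeasure.limsup_measure_closed_le_of_tendsto h2 hV.isClosed_compl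
    simp only [ProbabilityMeasure.toMeasure_map, Function.comp_apply,
      Measure.map_apply hψ hV.isClosed_compl.measurableSet] at h_closed
    have hBK : B ⊆ Prod.snd ⁻¹' Kᶜ := fun p hp hpK => hp (hKV ⟨p.2, hpK, rfl⟩)
    rw [Measure.map_apply measurable_snd hK.isClosed.measurableSet.compl] at hKη
    exact h_closed.trans ((measure_mono hBK).trans hKη)
  calc (ν' : Measure (X × Y)) A
      ≤ (ν' : Measure (X × Y)) U + η :=
        (measure_le_inter_add_sdiff _ A C).trans <|
          add_le_add (measure_mono (Set.inter_subset_right.trans hCU)) hACη.le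
    _ ≤ L.liminf (fun i => (ν i : Measure (X × Y)) U) + η := by
        gcongr
        exact ProbabilityMeasure.le_liminf_measure_open_of_tendsto h1 hU
    _ ≤ L.liminf (fun i => (ν i : Measure (X × Y)) A + (ν i : Measure (X × Y)) B) + η := by
        refine add_le_add_left (liminf_le_liminf (Eventually.of_forall fun i => ?_)) η
        refine (measure_mono fun p hp => ?_).trans (measure_union_le A B)
        by_cases hpV : (p.2, f p.2) ∈ V
        exacts [Or.inl (hUV p hp hpV), Or.inr hpV]
    _ ≤ L.liminf (fun i => (ν i : Measure (X × Y)) A) + η + η := by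
        gcongr
        exact (ENNReal.liminf_add_le_liminf_add_limsup _ _).trans (by gcongr)
    _ = L.liminf (fun i => (ν i : Measure (X × Y)) A) + ε := by
        rw [add_assoc, ENNReal.add_halves]

include hf in
theorem tendsto_map_prodMk_graph_of_tendsto [L.IsCountablyGenerated] (h1 : Tendsto ν L (𝓝 ν'))
    (h2 : Tendsto
      (fun i => (ν i).map (measurable_snd.prodMk (hf.comp measurable_snd)).aemeasurable) L
      (𝓝 (ν'.map (measurable_snd.prodMk (hf.comp measurable_snd)).aemeasurable))) :
    Tendsto
      (fun i => (ν i).map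
        (measurable_fst.prodMk (measurable_snd.prodMk (hf.comp measurable_snd))).aemeasurable) L
      (𝓝 (ν'.map (measurable_fst.prodMk
        (measurable_snd.prodMk (hf.comp measurable_snd))).aemeasurable)) := by
  refine tendsto_of_forall_isOpen_le_liminf' fun G hG => ?_
  have hT : Measurable fun p : X × Y => (p.1, p.2, f p.2) := by fun_prop
  simp only [ProbabilityMeasure.toMeasure_map, Function.comp_apply,
    Measure.map_apply hT hG.measurableSet]
  exact measure_preimage_le_liminf_of_tendsto hf h1 h2 hG

end GraphExtension

/-- **Lemma 3.11.** If `(Yᵐ, Zᵐ) ⇒ (Y^∞, Z^∞)` in law and `(Zᵐ, f(Zᵐ)) ⇒ (Z^∞, f(Z^∞))`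
in law, where `f` is Borel measurable, then `(Yᵐ, Zᵐ, f(Zᵐ)) ⇒ (Y^∞, Z^∞, f(Z^∞))` in law.
Weak convergence is expressed by convergence of integrals of bounded continuous functions. -/
theorem markovian_projection_stmt4
    {E₁ E₂ E₃ : Type*}
    [TopologicalSpace E₁] [PolishSpace E₁] [MeasurableSpace E₁] [BorelSpace E₁]
    [TopologicalSpace E₂] [PolishSpace E₂] [MeasurableSpace E₂] [BorelSpace E₂]
    [TopologicalSpace E₃] [PolishSpace E₃] [MeasurableSpace E₃] [BorelSpace E₃]
    {Ω : ℕ → Type*} [∀ m, MeasurableSpace (Ω m)]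
    (P : ∀ m, Measure (Ω m)) (hP : ∀ m, IsProbabilityMeasure (P m))
    {Ω' : Type*} [MeasurableSpace Ω']
    (P' : Measure Ω') (hP' : IsProbabilityMeasure P')
    (Y : ∀ m, Ω m → E₁) (Z : ∀ m, Ω m → E₂) (Y' : Ω' → E₁) (Z' : Ω' → E₂)
    (hY : ∀ m, Measurable (Y m)) (hZ : ∀ m, Measurable (Z m))
    (hY' : Measurable Y') (hZ' : Measurable Z')
    (f : E₂ → E₃) (hf : Measurable f)
    (hconv1 : ∀ g : E₁ × E₂ →ᵇ ℝ,
      Tendsto (fun m => ∫ ω, g (Y m ω, Z m ω) ∂(P m)) atTop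
        (𝓝 (∫ ω, g (Y' ω, Z' ω) ∂P')))
    (hconv2 : ∀ g : E₂ × E₃ →ᵇ ℝ,
      Tendsto (fun m => ∫ ω, g (Z m ω, f (Z m ω)) ∂(P m)) atTop
        (𝓝 (∫ ω, g (Z' ω, f (Z' ω)) ∂P'))) :
    ∀ g : E₁ × E₂ × E₃ →ᵇ ℝ,
      Tendsto (fun m => ∫ ω, g (Y m ω, Z m ω, f (Z m ω)) ∂(P m)) atTop
        (𝓝 (∫ ω, g (Y' ω, Z' ω, f (Z' ω)) ∂P')) := by
  let Q : ∀ m, ProbabilityMeasure (Ω m) := fun m => ⟨P m, hP m⟩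
  let Q' : ProbabilityMeasure Ω' := ⟨P', hP'⟩
  have hYZ : ∀ m, Measurable fun ω => (Y m ω, Z m ω) := fun m => (hY m).prodMk (hZ m)
  have hYZ' : Measurable fun ω => (Y' ω, Z' ω) := hY'.prodMk hZ'
  have hψ : Measurable fun p : E₁ × E₂ => (p.2, f p.2) :=
    measurable_snd.prodMk (hf.comp measurable_snd)
  have h1 := (ProbabilityMeasure.tendsto_map_iff_forall_integral_tendsto Q Q' hYZ hYZ').2 hconv1
  have h2 :=
    (ProbabilityMeasure.tendsto_map_map_iff_forall_integral_tendsto Q Q' hYZ hYZ' hψ).2 hconv2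
  exact (ProbabilityMeasure.tendsto_map_map_iff_forall_integral_tendsto Q Q' hYZ hYZ'
    (measurable_fst.prodMk hψ)).1 (tendsto_map_prodMk_graph_of_tendsto hf h1 h2)
end

section
/- Let E₁, E₂, E₃ be Polish spaces equipped with their Borel σ-algebras, let f : E₂ → E₃ be a Borel measurable function, and let P be a Borel probability measure on E₁ × E₂. Let μ be a Borel probability measure on E₁ × E₂ × E₂ × E₃ such that: (a) μ({(x₁, x₂, x₃, x₄) : x₂ = x₃}) = 1; (b) the pushforward of μ under (x₁, x₂, x₃, x₄) ↦ (x₁, x₂) equals P; and (c) the pushforward of μ under (x₁, x₂, x₃, x₄) ↦ (x₃, x₄) equals the pushforward of the second marginal of P under z ↦ (z, f(z)). Then μ equals the pushforward of P under (x₁, x₂) ↦ (x₁, x₂, x₂, f(x₂)). -/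
open MeasureTheory Filter Topology
open scoped NNReal ENNReal

/-- Identification of the limit coupling (key step in Lemma 3.11): if a probability
measure `μ` on `E₁ × E₂ × E₂ × E₃` gives full mass to `{x₂ = x₃}`, has `(x₁,x₂)`-marginal
`P` and `(x₃,x₄)`-marginal equal to the law of `(z, f(z))` under the second marginal of
`P`, then `μ` is the pushforward of `P` under `(x₁,x₂) ↦ (x₁,x₂,x₂,f(x₂))`. -/
theorem markovian_projection_stmt5
    {E₁ E₂ E₃ : Type*}
    [TopologicalSpace E₁] [PolishSpace E₁] [MeasurableSpace E₁] [BorelSpace E₁]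
    [TopologicalSpace E₂] [PolishSpace E₂] [MeasurableSpace E₂] [BorelSpace E₂]
    [TopologicalSpace E₃] [PolishSpace E₃] [MeasurableSpace E₃] [BorelSpace E₃]
    (f : E₂ → E₃) (hf : Measurable f)
    (P : Measure (E₁ × E₂)) [IsProbabilityMeasure P]
    (μ : Measure (E₁ × E₂ × E₂ × E₃)) [IsProbabilityMeasure μ]
    (ha : μ {p : E₁ × E₂ × E₂ × E₃ | p.2.1 = p.2.2.1} = 1)
    (hb : μ.map (fun p => (p.1, p.2.1)) = P)
    (hc : μ.map (fun p => p.2.2) = (P.map Prod.snd).map (fun z => (z, f z))) :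
    μ = P.map (fun q => (q.1, q.2, q.2, f q.2)) := by
  have hproj : Measurable (fun p : E₁ × E₂ × E₂ × E₃ => (p.1, p.2.1)) := by fun_prop
  have h23 : Measurable (fun p : E₁ × E₂ × E₂ × E₃ => p.2.2) := by fun_prop
  have hgr : Measurable (fun z : E₂ => (z, f z)) := by fun_prop
  -- a.e. x₂ = x₃
  have hset : MeasurableSet {p : E₁ × E₂ × E₂ × E₃ | p.2.1 = p.2.2.1} :=
    MeasureTheory.StronglyMeasurable.measurableSet_eq_fun
      (Measurable.stronglyMeasurable (by fun_prop))
      (Measurable.stronglyMeasurable (by fun_prop))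
  have h2 : ∀ᵐ p ∂μ, p.2.1 = p.2.2.1 := by
    rw [ae_iff]
    have := prob_compl_eq_zero_iff (μ := μ) hset |>.mpr ha
    simpa [Set.compl_setOf] using this
  -- a.e. x₄ = f x₃
  have hS : MeasurableSet {q : E₂ × E₃ | q.2 = f q.1} :=
    MeasureTheory.StronglyMeasurable.measurableSet_eq_fun
      measurable_snd.stronglyMeasurable (hf.comp measurable_fst).stronglyMeasurable
  have h4 : ∀ᵐ p ∂μ, p.2.2.2 = f p.2.2.1 := by
    have hmap : μ.map (fun p => p.2.2) {q : E₂ × E₃ | q.2 = f q.1} = 1 := by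
      rw [hc, Measure.map_apply hgr hS]
      have : (fun z : E₂ => (z, f z)) ⁻¹' {q : E₂ × E₃ | q.2 = f q.1} = Set.univ := by
        ext z; simp
      rw [this, Measure.map_apply measurable_snd MeasurableSet.univ]
      simp
    rw [Measure.map_apply h23 hS] at hmap
    rw [ae_iff]
    have := prob_compl_eq_zero_iff (μ := μ) (h23 hS) |>.mpr hmap
    simpa [Set.compl_setOf, Set.preimage_setOf_eq] using this
  have hid : (fun p : E₁ × E₂ × E₂ × E₃ => p) =ᵐ[μ]
      (fun p => (p.1, p.2.1, p.2.1, f p.2.1)) := by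
    filter_upwards [h2, h4] with p hp2 hp4
    obtain ⟨a, b, c, d⟩ := p
    simp only at hp2 hp4 ⊢
    subst hp2; subst hp4; rfl
  calc μ = μ.map (fun p => p) := (Measure.map_id).symm
    _ = μ.map (fun p => (p.1, p.2.1, p.2.1, f p.2.1)) := Measure.map_congr hid
    _ = (μ.map (fun p => (p.1, p.2.1))).map (fun q => (q.1, q.2, q.2, f q.2)) := by
        rw [Measure.map_map (by fun_prop) hproj]; rfl
    _ = P.map (fun q => (q.1, q.2, q.2, f q.2)) := by rw [hb]
end
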